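/- arXiv:0901.4266 — 4 statements merged into one kernel-verified Lean document; each statement's English description precedes it below -/
import Mathlib

section
/- Moment bound for the relative error of the empirical eigenvalues: Let m ∈ ℕ and suppose X ∈ 𝒳^{4m}_η for some η ≥ 1. Then there exists a constant C > 0, depending only on m, such that sup_{j≥1} E|λ̂_j/λ_j − 1|^{2m} ≤ C·n^{-m}·η, where λ̂_j := n^{-1} Σ_{i=1}^n ⟨X_i,ψ_j⟩² for an i.i.d. sample X_1,…,X_n of X. -/
open MeasureTheory ProbabilityTheory Filter
open scoped ENNReal NNReal RealInnerProductSpace BigOperators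

noncomputable section

variable {H : Type*} [NormedAddCommGroup H] [InnerProductSpace ℝ H]

/-- The squared weighted norm `‖f‖²_w = ∑_j w_j ⟨f, ψ_j⟩²`, valued in `ℝ≥0∞`. -/
def wNormSq (ψ : ℕ → H) (w : ℕ → ℝ) (f : H) : ℝ≥0∞ :=
  ∑' j, ENNReal.ofReal (w j * ⟪f, ψ j⟫ ^ 2)

/-- The ellipsoid `F^ρ_w = {f : ‖f‖²_w ≤ ρ}`. -/
def ellipsoid (ψ : ℕ → H) (w : ℕ → ℝ) (ρ : ℝ) : Set H :=
  {f | wNormSq ψ w f ≤ ENNReal.ofReal ρ}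

/-- The empirical coefficients `ĝ_j = n⁻¹ ∑ᵢ Yᵢ⟨Xᵢ, ψ_j⟩`. -/
def estG (ψ : ℕ → H) {n : ℕ} (Ys : Fin n → ℝ) (Xs : Fin n → H) (j : ℕ) : ℝ :=
  (n : ℝ)⁻¹ * ∑ i, Ys i * ⟪Xs i, ψ j⟫

/-- The empirical eigenvalues `λ̂_j = n⁻¹ ∑ᵢ ⟨Xᵢ, ψ_j⟩²`. -/
def estLam (ψ : ℕ → H) {n : ℕ} (Xs : Fin n → H) (j : ℕ) : ℝ :=
  (n : ℝ)⁻¹ * ∑ i, ⟪Xs i, ψ j⟫ ^ 2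

/-- The thresholded orthogonal series estimator
`β̂ = ∑_{j=1}^m (ĝ_j/λ̂_j)·1{λ̂_j ≥ α}·ψ_j` (indices shifted to start at `0`). -/
def estBeta (ψ : ℕ → H) {n : ℕ} (m : ℕ) (α : ℝ) (Ys : Fin n → ℝ) (Xs : Fin n → H) : H :=
  ∑ j ∈ Finset.range m,
    (if α ≤ estLam ψ Xs j then estG ψ Ys Xs j / estLam ψ Xs j else 0) • ψ j

/-- The truncated target `β̃_m = ∑_{j=1}^m ⟨β,ψ_j⟩·1{λ̂_j ≥ α}·ψ_j`. -/
def truncBeta (ψ : ℕ → H) (β : H) {n : ℕ} (m : ℕ) (α : ℝ) (Xs : Fin n → H) : H :=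
  ∑ j ∈ Finset.range m, (if α ≤ estLam ψ Xs j then ⟪β, ψ j⟫ else 0) • ψ j

/-- Sobolev weights `w^p` for the periodic Sobolev ellipsoid: index `j : ℕ` corresponds to
the paper's index `j+1`, so `w^p_1 = 1`, `w^p_{2k} = w^p_{2k+1} = k^{2p}`. -/
def sobW (p : ℝ) (j : ℕ) : ℝ := if j = 0 then 1 else (((j + 1) / 2 : ℕ) : ℝ) ^ (2 * p)

/-- Polynomially decaying weights: `υ_1 = 1`, `υ_j = j^{-2a}` for `j ≥ 2`
(index `j : ℕ` corresponds to the paper's index `j+1`). -/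
def polyW (a : ℝ) (j : ℕ) : ℝ := if j = 0 then 1 else ((j + 1 : ℕ) : ℝ) ^ (-(2 * a))

/-- Exponentially decaying weights: `υ_1 = 1`, `υ_j = exp(-j^{2a})` for `j ≥ 2`
(index `j : ℕ` corresponds to the paper's index `j+1`). -/
def expW (a : ℝ) (j : ℕ) : ℝ :=
  if j = 0 then 1 else Real.exp (-(((j + 1 : ℕ) : ℝ) ^ (2 * a)))

/-- The link condition `(λ_j) ∈ S^d_υ`. -/
def linkCond (Λ υ : ℕ → ℝ) (d : ℝ) : Prop :=
  ∀ j, 1 / d ≤ Λ j / υ j ∧ Λ j / υ j ≤ d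

end

/-!
Write `λ̂_j / λ_j - 1 = n⁻¹ ∑ᵢ Zᵢ` with `Zᵢ = ξᵢ² - 1` and `ξᵢ = ⟨Xᵢ, ψ_j⟩ / √λ_j`. The `Zᵢ` are
independent, centred (stationarity gives `E ξᵢ² = 1`) and `E|Zᵢ|^{2m} ≤ E|ξᵢ|^{4m} + 1 ≤ 2η`.
Expanding `E (∑ᵢ Zᵢ)^{2m}` over words `f : Fin (2m) → Fin n`, independence kills every word in
which some letter occurs exactly once, so the surviving words use at most `m` letters. There are at
most `m^{2m} n^m` of them, and by Hölder's inequality each contributes at most `2η`.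
-/

open Finset

section Counting

variable {ι : Type*} [DecidableEq ι]

lemma two_mul_card_image_le_of_card_fiber_ne_one {q : ℕ} (f : Fin q → ι)
    (hf : ∀ i, #{t | f t = i} ≠ 1) : 2 * #(univ.image f) ≤ q := by
  calc 2 * #(univ.image f) = ∑ _i ∈ univ.image f, 2 := by rw [sum_const, smul_eq_mul, mul_comm]
    _ ≤ ∑ i ∈ univ.image f, #{t | f t = i} := by
        refine sum_le_sum fun i hi => ?_
        obtain ⟨t, -, rfl⟩ := mem_image.mp hi
        have : 0 < #{s | f s = f t} := card_pos.mpr ⟨t, by simp⟩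
        have := hf (f t)
        omega
    _ = q := by rw [← card_eq_sum_card_image, card_univ, Fintype.card_fin]

lemma card_filter_card_image_le [Fintype ι] [Nonempty ι] (q m : ℕ) :
    #{f : Fin q → ι | #(univ.image f) ≤ m} ≤ m ^ q * Fintype.card ι ^ m := by
  have hsub : ({f : Fin q → ι | #(univ.image f) ≤ m} : Finset _)
      ⊆ univ.image fun p : (Fin q → Fin m) × (Fin m → ι) => p.2 ∘ p.1 := by
    intro f hf
    -- a word using at most `m` letters factors through `Fin m`
    have hcard : Fintype.card (univ.image f) ≤ Fintype.card (Fin m) := by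
      rw [Fintype.card_coe, Fintype.card_fin]; exact (mem_filter.mp hf).2
    obtain ⟨e⟩ := Function.Embedding.nonempty_of_card_le hcard
    refine mem_image.mpr ⟨(fun t => e ⟨f t, mem_image_of_mem f (mem_univ t)⟩,
      Function.extend e Subtype.val fun _ => Classical.arbitrary ι), mem_univ _, ?_⟩
    funext t
    simp [e.injective.extend_apply]
  calc _ ≤ _ := card_le_card hsub
    _ ≤ _ := card_image_le
    _ = m ^ q * Fintype.card ι ^ m := by simp

lemma card_filter_card_fiber_ne_one_le [Fintype ι] [Nonempty ι] (m : ℕ) :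
    #{f : Fin (2 * m) → ι | ∀ i, #{t | f t = i} ≠ 1} ≤ m ^ (2 * m) * Fintype.card ι ^ m :=
  (card_le_card (monotone_filter_right _ fun f _ hf => by
    have := two_mul_card_image_le_of_card_fiber_ne_one f hf; omega)).trans
    (card_filter_card_image_le (2 * m) m)

end Counting

lemma lintegral_prod_le_of_lintegral_pow_le {α κ : Type*} [MeasurableSpace α] {μ : Measure α}
    [Fintype κ] [Nonempty κ] {g : κ → α → ℝ≥0∞} (hg : ∀ t, AEMeasurable (g t) μ) {B : ℝ≥0∞}
    (hB : ∀ t, ∫⁻ a, g t a ^ Fintype.card κ ∂μ ≤ B) :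
    ∫⁻ a, ∏ t, g t a ∂μ ≤ B := by
  set q := Fintype.card κ
  have hq : (q : ℝ) ≠ 0 := by positivity
  calc ∫⁻ a, ∏ t, g t a ∂μ = ∫⁻ a, ∏ t, (g t a ^ q) ^ (q⁻¹ : ℝ) ∂μ := by
        simp_rw [← ENNReal.rpow_natCast, ← ENNReal.rpow_mul, mul_inv_cancel₀ hq, ENNReal.rpow_one]
    _ ≤ ∏ t, (∫⁻ a, g t a ^ q ∂μ) ^ (q⁻¹ : ℝ) :=
        ENNReal.lintegral_prod_norm_pow_le _ (fun t _ => (hg t).pow_const q)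
          (by simp [q, hq]) (fun _ _ => by positivity)
    _ ≤ ∏ _t : κ, B ^ (q⁻¹ : ℝ) := by gcongr with t; exact hB t
    _ = B := by
        rw [prod_const, card_univ, ← ENNReal.rpow_natCast, ← ENNReal.rpow_mul,
          inv_mul_cancel₀ hq, ENNReal.rpow_one]

section Moments

variable {Ω ι : Type*} [MeasurableSpace Ω] {P : Measure Ω} {Z : ι → Ω → ℝ}

lemma integral_prod_eq_zero_of_card_fiber_eq_one [Fintype ι] [DecidableEq ι] (hZ : iIndepFun Z P)
    (hmeas : ∀ i, AEMeasurable (Z i) P) (hmean : ∀ i, ∫ ω, Z i ω ∂P = 0) {q : ℕ} (f : Fin q → ι)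
    {i : ι} (hi : #{t | f t = i} = 1) : ∫ ω, ∏ t, Z (f t) ω ∂P = 0 := by
  have hfiber : ∀ ω, ∏ t, Z (f t) ω = ∏ k, Z k ω ^ #{t | f t = k} := fun ω => by
    rw [← prod_fiberwise' univ f fun k => Z k ω]
    simp only [prod_const]
  simp_rw [hfiber]
  rw [hZ.integral_fun_prod_comp (f := fun k x => x ^ #{t | f t = k}) hmeas
    fun _ => (continuous_pow _).aestronglyMeasurable]
  exact prod_eq_zero (mem_univ i) (by simpa [hi] using hmean i)

lemma lintegral_enorm_prod_le [IsProbabilityMeasure P] [Nonempty ι]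
    (hmeas : ∀ i, AEMeasurable (Z i) P) {q : ℕ} (f : Fin q → ι) {B : ℝ≥0∞}
    (hB : ∀ i, ∫⁻ ω, ‖Z i ω‖ₑ ^ q ∂P ≤ B) : ∫⁻ ω, ‖∏ t, Z (f t) ω‖ₑ ∂P ≤ B := by
  simp_rw [enorm_eq_nnnorm, nnnorm_prod, ENNReal.ofNNReal_finsetProd, ← enorm_eq_nnnorm]
  rcases Nat.eq_zero_or_pos q with rfl | hq
  · simpa using hB (Classical.arbitrary ι)
  · have : Nonempty (Fin q) := ⟨⟨0, hq⟩⟩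
    exact lintegral_prod_le_of_lintegral_pow_le (fun t => (hmeas (f t)).enorm)
      fun t => by simpa using hB (f t)

lemma integrable_prod_comp [IsProbabilityMeasure P] [Nonempty ι]
    (hmeas : ∀ i, AEMeasurable (Z i) P) {q : ℕ} (f : Fin q → ι) {b : ℝ≥0}
    (hb : ∀ i, ∫⁻ ω, ‖Z i ω‖ₑ ^ q ∂P ≤ b) : Integrable (fun ω => ∏ t, Z (f t) ω) P :=
  ⟨Finset.aestronglyMeasurable_fun_prod _ fun t _ => (hmeas (f t)).aestronglyMeasurable,
    (lintegral_enorm_prod_le hmeas f hb).trans_lt ENNReal.coe_lt_top⟩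

lemma integral_prod_comp_le [IsProbabilityMeasure P] [Nonempty ι]
    (hmeas : ∀ i, AEMeasurable (Z i) P) {q : ℕ} (f : Fin q → ι) {b : ℝ≥0}
    (hb : ∀ i, ∫⁻ ω, ‖Z i ω‖ₑ ^ q ∂P ≤ b) : ∫ ω, ∏ t, Z (f t) ω ∂P ≤ b := by
  have h : ‖∫ ω, ∏ t, Z (f t) ω ∂P‖ₑ ≤ b :=
    (enorm_integral_le_lintegral_enorm _).trans (lintegral_enorm_prod_le hmeas f hb)
  exact (Real.le_norm_self _).trans (by exact_mod_cast h)

theorem lintegral_enorm_sum_pow_le [IsProbabilityMeasure P] [Fintype ι] [Nonempty ι]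
    (hZ : iIndepFun Z P) (hmeas : ∀ i, AEMeasurable (Z i) P) (hmean : ∀ i, ∫ ω, Z i ω ∂P = 0)
    (m : ℕ) {b : ℝ≥0} (hb : ∀ i, ∫⁻ ω, ‖Z i ω‖ₑ ^ (2 * m) ∂P ≤ b) :
    ∫⁻ ω, ‖∑ i, Z i ω‖ₑ ^ (2 * m) ∂P ≤ (m ^ (2 * m) * Fintype.card ι ^ m * b : ℝ≥0) := by
  classical
  have hexpand : (fun ω => (∑ i, Z i ω) ^ (2 * m))
      = fun ω => ∑ f : Fin (2 * m) → ι, ∏ t, Z (f t) ω :=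
    funext fun ω => Fintype.sum_pow _ _
  have hvanish (f : Fin (2 * m) → ι) (hf : ∫ ω, ∏ t, Z (f t) ω ∂P ≠ 0) :
      ∀ i, #{t | f t = i} ≠ 1 :=
    fun i hi => hf (integral_prod_eq_zero_of_card_fiber_eq_one hZ hmeas hmean f hi)
  calc ∫⁻ ω, ‖∑ i, Z i ω‖ₑ ^ (2 * m) ∂P
      = ENNReal.ofReal (∫ ω, (∑ i, Z i ω) ^ (2 * m) ∂P) := by
        rw [ofReal_integral_eq_lintegral_ofReal]
        · refine lintegral_congr fun ω => ?_
          rw [← ofReal_norm, ← ENNReal.ofReal_pow (norm_nonneg _), Real.norm_eq_abs,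
            (even_two_mul m).pow_abs]
        · rw [hexpand]
          exact integrable_finsetSum _ fun f _ => integrable_prod_comp hmeas f hb
        · exact ae_of_all _ fun ω => (even_two_mul m).pow_nonneg _
    _ = ENNReal.ofReal
          (∑ f : Fin (2 * m) → ι with ∀ i, #{t | f t = i} ≠ 1, ∫ ω, ∏ t, Z (f t) ω ∂P) := by
        rw [hexpand, integral_finsetSum _ fun f _ => integrable_prod_comp hmeas f hb,
          sum_filter_of_ne fun f _ => hvanish f]
    _ ≤ ENNReal.ofReal (#{f : Fin (2 * m) → ι | ∀ i, #{t | f t = i} ≠ 1} * b) := by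
        gcongr
        simpa using sum_le_card_nsmul _ _ _ fun f _ => integral_prod_comp_le hmeas f hb
    _ ≤ _ := by
        rw [← ENNReal.ofReal_coe_nnreal]
        gcongr
        push_cast
        exact mul_le_mul_of_nonneg_right (by exact_mod_cast card_filter_card_fiber_ne_one_le m)
          b.2

theorem lintegral_enorm_average_pow_le [IsProbabilityMeasure P] {n : ℕ} (hn : 0 < n)
    {Z : Fin n → Ω → ℝ} (hZ : iIndepFun Z P) (hmeas : ∀ i, AEMeasurable (Z i) P)
    (hmean : ∀ i, ∫ ω, Z i ω ∂P = 0) (m : ℕ) {b : ℝ≥0}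
    (hb : ∀ i, ∫⁻ ω, ‖Z i ω‖ₑ ^ (2 * m) ∂P ≤ b) :
    ∫⁻ ω, ‖(n : ℝ)⁻¹ * ∑ i, Z i ω‖ₑ ^ (2 * m) ∂P
      ≤ ENNReal.ofReal (m ^ (2 * m) * ((n : ℝ) ^ m)⁻¹ * b) := by
  have : Nonempty (Fin n) := ⟨⟨0, hn⟩⟩
  calc ∫⁻ ω, ‖(n : ℝ)⁻¹ * ∑ i, Z i ω‖ₑ ^ (2 * m) ∂P
      = ‖(n : ℝ)⁻¹‖ₑ ^ (2 * m) * ∫⁻ ω, ‖∑ i, Z i ω‖ₑ ^ (2 * m) ∂P := by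
        simp_rw [enorm_mul, mul_pow]
        exact lintegral_const_mul' _ _ (by simp)
    _ ≤ ‖(n : ℝ)⁻¹‖ₑ ^ (2 * m) * (m ^ (2 * m) * n ^ m * b : ℝ≥0) := by
        gcongr
        simpa using lintegral_enorm_sum_pow_le hZ hmeas hmean m hb
    _ = ENNReal.ofReal (m ^ (2 * m) * ((n : ℝ) ^ m)⁻¹ * b) := by
        rw [Real.enorm_of_nonneg (by positivity), ← ENNReal.ofReal_pow (by positivity),
          ← ENNReal.ofReal_coe_nnreal, ← ENNReal.ofReal_mul (by positivity)]
        congr 1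
        push_cast
        rw [pow_mul', inv_pow, sq]
        field_simp

lemma lintegral_enorm_sq_sub_one_pow_le [IsProbabilityMeasure P] {Y : Ω → ℝ} {q : ℕ}
    {B : ℝ≥0∞} (hY : ∫⁻ ω, ‖Y ω‖ₑ ^ (2 * q) ∂P ≤ B) (hB : 1 ≤ B) :
    ∫⁻ ω, ‖Y ω ^ 2 - 1‖ₑ ^ q ∂P ≤ 2 * B := by
  have hpt (y : ℝ) : |y ^ 2 - 1| ^ q ≤ |y| ^ (2 * q) + 1 := by
    rcases le_total (y ^ 2) 1 with h | h
    · have : |y ^ 2 - 1| ^ q ≤ 1 :=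
        pow_le_one₀ (abs_nonneg _) (abs_le.mpr ⟨by nlinarith [sq_nonneg y], by linarith⟩)
      linarith [pow_nonneg (abs_nonneg y) (2 * q)]
    · have : |y ^ 2 - 1| ≤ |y| ^ 2 := by rw [sq_abs, abs_le]; constructor <;> linarith
      calc |y ^ 2 - 1| ^ q ≤ (|y| ^ 2) ^ q := pow_le_pow_left₀ (abs_nonneg _) this q
        _ = |y| ^ (2 * q) := by rw [pow_mul]
        _ ≤ |y| ^ (2 * q) + 1 := le_add_of_nonneg_right zero_le_one
  calc ∫⁻ ω, ‖Y ω ^ 2 - 1‖ₑ ^ q ∂P ≤ ∫⁻ ω, (‖Y ω‖ₑ ^ (2 * q) + 1) ∂P := by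
        refine lintegral_mono fun ω => ?_
        have := ENNReal.ofReal_le_ofReal (hpt (Y ω))
        rwa [ENNReal.ofReal_add (by positivity) zero_le_one, ENNReal.ofReal_one,
          ENNReal.ofReal_pow (abs_nonneg _), ENNReal.ofReal_pow (abs_nonneg _),
          ← Real.enorm_eq_ofReal_abs, ← Real.enorm_eq_ofReal_abs] at this
    _ = ∫⁻ ω, ‖Y ω‖ₑ ^ (2 * q) ∂P + 1 := by simp [lintegral_add_right _ measurable_const]
    _ ≤ 2 * B := two_mul B ▸ add_le_add hY hB

end Moments

lemma estLam_div_sub_one {H : Type*} [NormedAddCommGroup H] [InnerProductSpace ℝ H]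
    (ψ : ℕ → H) {n : ℕ} (hn : 0 < n) (Xs : Fin n → H) (j : ℕ) {c : ℝ} (hc : 0 < c) :
    estLam ψ Xs j / c - 1 = (n : ℝ)⁻¹ * ∑ i, ((⟪Xs i, ψ j⟫ / √c) ^ 2 - 1) := by
  simp only [estLam, div_pow, Real.sq_sqrt hc.le, sum_sub_distrib, ← sum_div, sum_const,
    card_univ, Fintype.card_fin, nsmul_eq_mul, mul_one]
  field_simp

/-- Moment bound for the relative error of the empirical eigenvalues.
For every `m` there is a constant `C > 0` depending only on `m` such that for every
second-order stationary `X ∈ 𝒳^{4m}_η` and i.i.d. sample `X_1, …, X_n`,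
`sup_j E|λ̂_j/λ_j - 1|^{2m} ≤ C n^{-m} η`. -/
theorem stmt12 (m : ℕ) :
    ∃ C : ℝ, 0 < C ∧
      ∀ (H : Type*) [NormedAddCommGroup H] [InnerProductSpace ℝ H] [CompleteSpace H]
        [MeasurableSpace H] [BorelSpace H]
        (Ω : Type*) [MeasurableSpace Ω] (P : Measure Ω) [IsProbabilityMeasure P]
        (ψ : ℕ → H) (_hψ : Orthonormal ℝ ψ)
        (n : ℕ) (_hn : 0 < n) (X : Fin n → Ω → H)
        (_hXmeas : ∀ i, Measurable (X i))
        -- i.i.d. sample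
        (_hindep : iIndepFun X P)
        (_hident : ∀ i i', IdentDistrib (X i) (X i') P P)
        -- centered, with finite second moment
        (_hXcent : ∀ i, ∫ ω, X i ω ∂P = 0)
        (_hX2 : ∀ i, MemLp (X i) 2 P)
        -- second-order stationarity: uncorrelated coefficients with variances Λ j > 0
        (Λ : ℕ → ℝ) (_hΛpos : ∀ j, 0 < Λ j)
        (_hstat : ∀ i j k,
          ∫ ω, ⟪X i ω, ψ j⟫ * ⟪X i ω, ψ k⟫ ∂P = if j = k then Λ j else 0)
        -- moment class `X ∈ 𝒳^{4m}_η`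
        (η : ℝ) (_hη : 1 ≤ η)
        (_hmom : ∀ (i : Fin n) (j : ℕ),
          ∫⁻ ω, (‖⟪X i ω, ψ j⟫ / Real.sqrt (Λ j)‖₊ : ℝ≥0∞) ^ (4 * m) ∂P ≤
            ENNReal.ofReal η),
        ∀ j : ℕ,
          ∫⁻ ω, (‖estLam ψ (fun i => X i ω) j / Λ j - 1‖₊ : ℝ≥0∞) ^ (2 * m) ∂P ≤
            ENNReal.ofReal (C * ((n : ℝ) ^ m)⁻¹ * η) := by
  refine ⟨2 * m ^ (2 * m), by cases m <;> positivity, ?_⟩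
  intro H _ _ _ _ _ Ω _ P _ ψ _ n hn X hXmeas hindep _ _ _ Λ hΛpos hstat η hη hmom j
  set ξ : H → ℝ := fun h => ⟪h, ψ j⟫ / √(Λ j)
  have hξ : Measurable ξ := (continuous_id.inner continuous_const).measurable.div_const _
  have hmean (i : Fin n) : ∫ ω, (ξ (X i ω) ^ 2 - 1) ∂P = 0 := by
    have h : ∫ ω, ξ (X i ω) ^ 2 ∂P = 1 := by
      simp_rw [ξ, div_pow, Real.sq_sqrt (hΛpos j).le, integral_div, sq, hstat i j j]
      exact div_self (hΛpos j).ne'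
    -- `ξ (X i)²` is integrable since its integral is `1 ≠ 0`
    rw [integral_sub (Integrable.of_integral_ne_zero (h ▸ one_ne_zero)) (integrable_const 1), h]
    simp
  have hmoment (i : Fin n) :
      ∫⁻ ω, ‖ξ (X i ω) ^ 2 - 1‖ₑ ^ (2 * m) ∂P ≤ (2 * η).toNNReal := by
    refine (lintegral_enorm_sq_sub_one_pow_le (by rw [← mul_assoc]; exact hmom i j)
      (ENNReal.one_le_ofReal.mpr hη)).trans_eq ?_
    rw [← ENNReal.ofReal_ofNat 2, ← ENNReal.ofReal_mul zero_le_two]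
    rfl
  simp_rw [← enorm_eq_nnnorm, estLam_div_sub_one ψ hn _ j (hΛpos j)]
  refine (lintegral_enorm_average_pow_le hn (hindep.comp _ fun _ => (hξ.pow_const 2).sub_const 1)
    (fun i => (((hξ.comp (hXmeas i)).pow_const 2).sub_const 1).aemeasurable) hmean m
    hmoment).trans_eq ?_
  rw [Real.coe_toNNReal _ (by linarith)]
  ring_nf
end

section
/- Deterministic inequalities for the Assouad construction: Let the sequences ω, γ, υ satisfy Assumption REG, let σ > 0, d ≥ 1, ρ > 0, n ∈ ℕ, and let k* ∈ ℕ and Δ ≥ 1 satisfy the rate condition, with δ* := ω_{k*}/γ_{k*}. Define ζ := min(σ²/(2d), ρ/Δ) and b_j² := ζ/(n·υ_j) for all j ≥ 1. Then: (i) (2dn/σ²)·b_j²·υ_j ≤ 1 for all j ≥ 1; (ii) Σ_{j=1}^{k*} b_j²·γ_j ≤ ρ; and (iii) Σ_{j=1}^{k*} b_j²·ω_j ≥ min(σ²/(2d), ρ/Δ)·max(δ*, 1/n)/Δ. -/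
open MeasureTheory ProbabilityTheory Filter
open scoped ENNReal NNReal RealInnerProductSpace BigOperators

/-! Under the rate condition, the Assouad coefficients `b_j² = ζ/(n υ_j)` satisfy
`∑_{j ≤ k*} b_j² w_j = (ζ/n) ∑_{j ≤ k*} w_j/υ_j` for every weight `w`. For `w = γ`, the monotonicity
of `γ/ω` bounds the sum by `(γ_{k*}/ω_{k*}) ∑ ω_j/υ_j`, which the upper rate bound turns into `ζΔ ≤ ρ`;
for `w = ω`, the lower rate bound gives `δ*/Δ ≤ (1/n) ∑ ω_j/υ_j`, and `ω_1/υ_1 = 1` gives the same with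
`1/n` in place of `δ*`. -/

lemma sum_sq_mul_eq_mul_sum_div {b υ w : ℕ → ℝ} {ζ n : ℝ} (hb : ∀ j, b j ^ 2 = ζ / (n * υ j))
    (s : Finset ℕ) : ∑ j ∈ s, b j ^ 2 * w j = ζ / n * ∑ j ∈ s, w j / υ j := by
  rw [Finset.mul_sum]
  refine Finset.sum_congr rfl fun j _ => ?_
  rw [hb]
  ring

lemma one_le_sum_range_div {ω υ : ℕ → ℝ} (hω : ∀ j, 0 < ω j) (hυ : ∀ j, 0 < υ j)
    (hω0 : ω 0 = 1) (hυ0 : υ 0 = 1) (k : ℕ) : 1 ≤ ∑ j ∈ Finset.range (k + 1), ω j / υ j := by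
  calc (1 : ℝ) = ω 0 / υ 0 := by rw [hω0, hυ0, div_one]
    _ ≤ ∑ j ∈ Finset.range (k + 1), ω j / υ j :=
      Finset.single_le_sum (fun j _ => (div_pos (hω j) (hυ j)).le) (by simp)

lemma sum_range_div_le_of_monotone_div {γ ω υ : ℕ → ℝ} (hω : ∀ j, 0 < ω j) (hυ : ∀ j, 0 < υ j)
    (hγω : Monotone fun j => γ j / ω j) (k : ℕ) :
    ∑ j ∈ Finset.range (k + 1), γ j / υ j ≤
      γ k / ω k * ∑ j ∈ Finset.range (k + 1), ω j / υ j := by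
  rw [Finset.mul_sum]
  refine Finset.sum_le_sum fun j hj => ?_
  have hjk : j ≤ k := Nat.lt_succ_iff.mp (Finset.mem_range.mp hj)
  calc γ j / υ j = γ j / ω j * (ω j / υ j) := by rw [div_mul_div_cancel₀ (hω j).ne']
    _ ≤ γ k / ω k * (ω j / υ j) := mul_le_mul_of_nonneg_right (hγω hjk) (div_pos (hω j) (hυ j)).le

lemma max_div_le_div_of_inv_le {a g n S Δ : ℝ} (ha : 0 < a) (hg : 0 < g) (hn : 0 < n)
    (hΔ : 1 ≤ Δ) (hS : 1 ≤ S) (h : 1 / Δ ≤ g / (n * a) * S) :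
    max (a / g) (1 / n) / Δ ≤ S / n := by
  have hΔpos : 0 < Δ := zero_lt_one.trans_le hΔ
  rw [div_le_iff₀ hΔpos]
  refine max_le ?_ ?_
  · calc a / g = a / g * (1 / Δ) * Δ := by field_simp
      _ ≤ a / g * (g / (n * a) * S) * Δ := by gcongr
      _ = S / n * Δ := by field_simp
  · calc 1 / n ≤ S / n * 1 := by rw [mul_one]; gcongr
      _ ≤ S / n * Δ := by gcongr

/-- Sequences are indexed by `ℕ` starting at `0` (paper index `j` ↔ `j-1` here); in particular
`k* : ℕ` below denotes the paper's `k* - 1`, so that sums `∑_{j=1}^{k*}` become sums over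
`Finset.range (kstar + 1)`. -/
theorem stmt14_general
    -- Assumption REG
    (ωw γ υ : ℕ → ℝ)
    (hωpos : ∀ j, 0 < ωw j) (hγpos : ∀ j, 0 < γ j) (hυpos : ∀ j, 0 < υ j)
    (hω1 : ωw 0 = 1) (hυ1 : υ 0 = 1)
    (hγωmono : Monotone fun j => γ j / ωw j)
    -- parameters
    (σ d ρ : ℝ) (hσ : 0 < σ) (hd : 1 ≤ d) (hρ : 0 < ρ)
    (n : ℕ) (hn : 0 < n) (kstar : ℕ) (Δ : ℝ) (hΔ : 1 ≤ Δ)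
    -- rate condition
    (hrate₁ : 1 / Δ ≤ γ kstar / (n * ωw kstar) * ∑ j ∈ Finset.range (kstar + 1), ωw j / υ j)
    (hrate₂ : γ kstar / (n * ωw kstar) * ∑ j ∈ Finset.range (kstar + 1), ωw j / υ j ≤ Δ)
    -- the Assouad coefficients b_j² = ζ/(n υ_j) with ζ = min(σ²/(2d), ρ/Δ)
    (ζ : ℝ) (hζ : ζ = min (σ ^ 2 / (2 * d)) (ρ / Δ))
    (b : ℕ → ℝ) (hb : ∀ j, b j ^ 2 = ζ / (n * υ j))
    -- δ* = ω_{k*}/γ_{k*}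
    (δstar : ℝ) (hδ : δstar = ωw kstar / γ kstar) :
    (∀ j, 2 * d * n / σ ^ 2 * (b j ^ 2 * υ j) ≤ 1) ∧
    (∑ j ∈ Finset.range (kstar + 1), b j ^ 2 * γ j ≤ ρ) ∧
    (min (σ ^ 2 / (2 * d)) (ρ / Δ) * max δstar (1 / n) / Δ ≤
      ∑ j ∈ Finset.range (kstar + 1), b j ^ 2 * ωw j) := by
  have hn' : (0 : ℝ) < n := Nat.cast_pos.mpr hn
  have hΔpos : 0 < Δ := zero_lt_one.trans_le hΔ
  have hdpos : 0 < d := zero_lt_one.trans_le hd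
  have hζσ : ζ ≤ σ ^ 2 / (2 * d) := hζ ▸ min_le_left _ _
  have hζρ : ζ ≤ ρ / Δ := hζ ▸ min_le_right _ _
  have hζpos : 0 < ζ := hζ ▸ lt_min (by positivity) (by positivity)
  set S := ∑ j ∈ Finset.range (kstar + 1), ωw j / υ j
  refine ⟨fun j => ?_, ?_, ?_⟩
  · have hbυ : b j ^ 2 * υ j = ζ / n := by
      rw [hb, div_mul_eq_mul_div, mul_div_mul_right _ _ (hυpos j).ne']
    calc 2 * d * n / σ ^ 2 * (b j ^ 2 * υ j) = 2 * d / σ ^ 2 * ζ := by rw [hbυ]; field_simp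
      _ ≤ 2 * d / σ ^ 2 * (σ ^ 2 / (2 * d)) := by gcongr
      _ = 1 := by field_simp
  · rw [sum_sq_mul_eq_mul_sum_div hb]
    calc ζ / n * ∑ j ∈ Finset.range (kstar + 1), γ j / υ j
          ≤ ζ / n * (γ kstar / ωw kstar * S) := by
          gcongr; exact sum_range_div_le_of_monotone_div hωpos hυpos hγωmono kstar
      _ = ζ * (γ kstar / (n * ωw kstar) * S) := by field_simp
      _ ≤ ρ / Δ * Δ := mul_le_mul hζρ hrate₂ (hrate₁.trans' (by positivity)) (by positivity)
      _ = ρ := div_mul_cancel₀ ρ hΔpos.ne'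
  · rw [sum_sq_mul_eq_mul_sum_div hb, ← hζ, hδ, mul_div_assoc, div_mul_eq_mul_div, mul_div_assoc]
    exact mul_le_mul_of_nonneg_left (max_div_le_div_of_inv_le (hωpos kstar) (hγpos kstar) hn' hΔ
      (one_le_sum_range_div hωpos hυpos hω1 hυ1 kstar) hrate₁) hζpos.le

/-- Deterministic inequalities for the Assouad construction.
Sequences are indexed by `ℕ` starting at `0` (paper index `j` ↔ `j-1` here); in particular
`k* : ℕ` below denotes the paper's `k* - 1`, so that sums `∑_{j=1}^{k*}` become sums over
`Finset.range (kstar + 1)`. -/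
theorem stmt14
    -- Assumption REG
    (ωw γ υ : ℕ → ℝ)
    (hωpos : ∀ j, 0 < ωw j) (hγpos : ∀ j, 0 < γ j) (hυpos : ∀ j, 0 < υ j)
    (hω1 : ωw 0 = 1) (hγ1 : γ 0 = 1) (hυ1 : υ 0 = 1)
    (hγmono : Monotone γ) (hγωmono : Monotone fun j => γ j / ωw j)
    (hυanti : Antitone υ) (hυsum : Summable υ)
    -- parameters
    (σ d ρ : ℝ) (hσ : 0 < σ) (hd : 1 ≤ d) (hρ : 0 < ρ)
    (n : ℕ) (hn : 0 < n) (kstar : ℕ) (Δ : ℝ) (hΔ : 1 ≤ Δ)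
    -- rate condition
    (hrate₁ : 1 / Δ ≤ γ kstar / (n * ωw kstar) * ∑ j ∈ Finset.range (kstar + 1), ωw j / υ j)
    (hrate₂ : γ kstar / (n * ωw kstar) * ∑ j ∈ Finset.range (kstar + 1), ωw j / υ j ≤ Δ)
    -- the Assouad coefficients b_j² = ζ/(n υ_j) with ζ = min(σ²/(2d), ρ/Δ)
    (ζ : ℝ) (hζ : ζ = min (σ ^ 2 / (2 * d)) (ρ / Δ))
    (b : ℕ → ℝ) (hb : ∀ j, b j ^ 2 = ζ / (n * υ j))
    -- δ* = ω_{k*}/γ_{k*}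
    (δstar : ℝ) (hδ : δstar = ωw kstar / γ kstar) :
    (∀ j, 2 * d * n / σ ^ 2 * (b j ^ 2 * υ j) ≤ 1) ∧
    (∑ j ∈ Finset.range (kstar + 1), b j ^ 2 * γ j ≤ ρ) ∧
    (min (σ ^ 2 / (2 * d)) (ρ / Δ) * max δstar (1 / n) / Δ ≤
      ∑ j ∈ Finset.range (kstar + 1), b j ^ 2 * ωw j) :=
  stmt14_general ωw γ υ hωpos hγpos hυpos hω1 hυ1 hγωmono σ d ρ hσ hd hρ n hn kstar Δ hΔ hrate₁
    hrate₂ ζ hζ b hb δstar hδ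
end

section
/- Bias-type bound for the truncated coefficients: Suppose X ∈ 𝒳^4_η for some η ≥ 1, let the strictly positive sequences ω and γ satisfy ω_1 = γ_1 = 1 with (γ_j/ω_j) nondecreasing, let β satisfy ‖β‖_γ < ∞, let m ∈ ℕ, α > 0, and assume λ_j ≥ 2α for all 1 ≤ j ≤ m. Then there exists a universal constant C > 0 such that E‖β̃_m − β‖²_ω ≤ C·(ω_m/γ_m + η/n)·‖β‖²_γ. -/
open MeasureTheory ProbabilityTheory Filter
open scoped ENNReal NNReal RealInnerProductSpace BigOperators

/-!
The `j`-th coefficient of `β̃ - β` is `-⟨β, ψ_j⟩` when `j > m` or `λ̂_j < α`, and `0` otherwise.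
The tail `j > m` contributes at most `(ω_m/γ_m) ‖β‖²_γ` because `γ/ω` is nondecreasing. For
`j ≤ m`, the event `λ̂_j < α ≤ λ_j/2` makes the sample mean of the `⟨X_i, ψ_j⟩²` deviate from its
mean `λ_j` by at least `λ_j/2`; Chebyshev's inequality with
`Var ⟨X, ψ_j⟩² ≤ E ⟨X, ψ_j⟩⁴ ≤ η λ_j²` gives `P(λ̂_j < α) ≤ 4η/n`, and as `ω_j ≤ γ_j` the head
contributes at most `(4η/n) ‖β‖²_γ`. Hence `C = 4` works.
-/

lemma ofReal_sq_sq_eq_enorm_pow_four (x : ℝ) : ENNReal.ofReal ((x ^ 2) ^ 2) = ‖x‖ₑ ^ 4 := by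
  rw [Real.enorm_eq_ofReal_abs, ← ENNReal.ofReal_pow (abs_nonneg _), ← pow_mul,
    Even.pow_abs ⟨2, rfl⟩]

section Moments

variable {Ω : Type*} [MeasurableSpace Ω] {P : Measure Ω}

lemma variance_sq_le_lintegral_enorm_pow_four [IsProbabilityMeasure P] {f : Ω → ℝ}
    (hf : AEStronglyMeasurable f P) :
    variance (fun ω => f ω ^ 2) P ≤ (∫⁻ ω, ‖f ω‖ₑ ^ 4 ∂P).toReal := by
  have hsq : AEStronglyMeasurable (fun ω => f ω ^ 2) P :=
    (hf.aemeasurable.pow_const 2).aestronglyMeasurable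
  refine (variance_le_expectation_sq hsq).trans_eq ?_
  simp only [Pi.pow_apply]
  rw [integral_eq_lintegral_of_nonneg_ae (Eventually.of_forall fun ω => by positivity)
    (hsq.aemeasurable.pow_const 2).aestronglyMeasurable]
  simp only [ofReal_sq_sq_eq_enorm_pow_four]

lemma memLp_two_sq_of_lintegral_enorm_pow_four_ne_top {f : Ω → ℝ}
    (hf : AEStronglyMeasurable f P) (h : ∫⁻ ω, ‖f ω‖ₑ ^ 4 ∂P ≠ ⊤) :
    MemLp (fun ω => f ω ^ 2) 2 P := by
  have hsq : AEStronglyMeasurable (fun ω => f ω ^ 2) P :=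
    (hf.aemeasurable.pow_const 2).aestronglyMeasurable
  refine (memLp_two_iff_integrable_sq hsq).2
    ⟨(hsq.aemeasurable.pow_const 2).aestronglyMeasurable, ?_⟩
  rw [hasFiniteIntegral_iff_ofReal (Eventually.of_forall fun ω => by positivity)]
  simpa only [ofReal_sq_sq_eq_enorm_pow_four] using h.lt_top

lemma lintegral_enorm_pow_four_eq_mul (f : Ω → ℝ) {c : ℝ} (hc : 0 < c) :
    ∫⁻ ω, ‖f ω‖ₑ ^ 4 ∂P = ENNReal.ofReal (c ^ 2) * ∫⁻ ω, ‖f ω / √c‖ₑ ^ 4 ∂P := by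
  rw [← lintegral_const_mul' _ _ ENNReal.ofReal_ne_top]
  refine lintegral_congr fun ω => ?_
  rw [← ofReal_sq_sq_eq_enorm_pow_four, ← ofReal_sq_sq_eq_enorm_pow_four,
    ← ENNReal.ofReal_mul (sq_nonneg c), div_pow, Real.sq_sqrt hc.le]
  field_simp

lemma measure_sampleMean_lt_le [IsFiniteMeasure P] {n : ℕ} (hn : 0 < n) {W : Fin n → Ω → ℝ}
    (hindep : Pairwise fun i j => W i ⟂ᵢ[P] W j) (hW : ∀ i, MemLp (W i) 2 P) {μ v α : ℝ}
    (hμ : 0 < μ) (hmean : ∀ i, ∫ ω, W i ω ∂P = μ) (hvar : ∀ i, variance (W i) P ≤ v)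
    (hα : 2 * α ≤ μ) :
    P {ω | (n : ℝ)⁻¹ * ∑ i, W i ω < α} ≤ ENNReal.ofReal (4 * v / (n * μ ^ 2)) := by
  have hn' : (0 : ℝ) < n := Nat.cast_pos.2 hn
  set T : Ω → ℝ := ∑ i, W i with hTdef
  have hT : ∀ ω, T ω = ∑ i, W i ω := fun ω => Finset.sum_apply ω _ _
  have hmeanT : ∫ ω, T ω ∂P = n * μ := by
    simp only [hT]
    rw [integral_finsetSum _ fun i _ => (hW i).integrable one_le_two]
    simp [hmean]
  have hvarT : variance T P ≤ n * v := by
    rw [hTdef, IndepFun.variance_sum (fun i _ => hW i) fun i _ j _ hij => hindep hij]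
    calc ∑ i, variance (W i) P ≤ ∑ _i : Fin n, v := Finset.sum_le_sum fun i _ => hvar i
      _ = n * v := by simp
  have hdev : {ω | (n : ℝ)⁻¹ * ∑ i, W i ω < α} ⊆ {ω | n * μ / 2 ≤ |T ω - ∫ ω, T ω ∂P|} := by
    intro ω hω
    have hsum : ∑ i, W i ω < n * α := by
      rw [Set.mem_ofPred_eq, inv_mul_lt_iff₀ hn'] at hω
      linarith
    rw [Set.mem_ofPred_eq, hmeanT, hT, abs_sub_comm]
    exact le_abs.2 (Or.inl (by nlinarith))
  calc P {ω | (n : ℝ)⁻¹ * ∑ i, W i ω < α}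
      ≤ P {ω | n * μ / 2 ≤ |T ω - ∫ ω, T ω ∂P|} := measure_mono hdev
    _ ≤ ENNReal.ofReal (variance T P / (n * μ / 2) ^ 2) :=
      meas_ge_le_variance_div_sq (memLp_finsetSum' _ fun i _ => hW i) (by positivity)
    _ ≤ ENNReal.ofReal (4 * v / (n * μ ^ 2)) := by
      refine ENNReal.ofReal_le_ofReal
        ((div_le_div_of_nonneg_right hvarT (by positivity)).trans_eq ?_)
      field_simp
      ring

end Moments

lemma le_mul_div_of_monotone_div {ι : Type*} [Preorder ι] {ωw γ : ι → ℝ}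
    (hmono : Monotone fun j => γ j / ωw j) {i j : ι} (hij : i ≤ j) (hωi : 0 < ωw i)
    (hωj : 0 < ωw j) (hγi : 0 < γ i) : ωw j ≤ γ j * (ωw i / γ i) := by
  have h : γ i / ωw i ≤ γ j / ωw j := hmono hij
  rw [div_le_div_iff₀ hωi hωj] at h
  rw [mul_div_assoc', le_div_iff₀ hγi]
  linarith

section Truncation

variable {H : Type*} [NormedAddCommGroup H] [InnerProductSpace ℝ H] {ψ : ℕ → H}

lemma inner_truncBeta_sub_self (hψ : Orthonormal ℝ ψ) (β : H) {n : ℕ} (m : ℕ) (α : ℝ)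
    (Xs : Fin n → H) (j : ℕ) :
    ⟪truncBeta ψ β m α Xs - β, ψ j⟫ = if j < m ∧ α ≤ estLam ψ Xs j then 0 else -⟪β, ψ j⟫ := by
  rw [inner_sub_left, truncBeta, sum_inner]
  simp only [real_inner_smul_left, orthonormal_iff_ite.1 hψ, mul_ite, mul_one, mul_zero,
    Finset.sum_ite_eq', Finset.mem_range]
  split_ifs <;> simp_all

lemma wNormSq_truncBeta_sub_self (hψ : Orthonormal ℝ ψ) (w : ℕ → ℝ) (β : H) {n : ℕ} (m : ℕ)
    (α : ℝ) (Xs : Fin n → H) :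
    wNormSq ψ w (truncBeta ψ β m α Xs - β) =
      ∑' j, if j < m ∧ α ≤ estLam ψ Xs j then 0 else ENNReal.ofReal (w j * ⟪β, ψ j⟫ ^ 2) := by
  refine tsum_congr fun j => ?_
  rw [inner_truncBeta_sub_self hψ]
  split_ifs <;> simp

end Truncation

section Estimator

variable {Ω : Type*} [MeasurableSpace Ω] {P : Measure Ω} [IsProbabilityMeasure P]
  {H : Type*} [NormedAddCommGroup H] [InnerProductSpace ℝ H] [MeasurableSpace H]
  [OpensMeasurableSpace H] {ψ : ℕ → H}

lemma measurable_estLam {n : ℕ} {X : Fin n → Ω → H} (hX : ∀ i, Measurable (X i)) (j : ℕ) :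
    Measurable fun ω => estLam ψ (fun i => X i ω) j :=
  (Finset.measurable_sum _ fun i _ =>
    (((continuous_id.inner continuous_const).measurable).comp (hX i)).pow_const 2).const_mul _

lemma measure_estLam_lt_le {n : ℕ} (hn : 0 < n) {X : Fin n → Ω → H}
    (hX : ∀ i, Measurable (X i)) (hindep : iIndepFun X P) {j : ℕ} {Λj η α : ℝ} (hΛ : 0 < Λj)
    (hη : 0 ≤ η) (hsecond : ∀ i, ∫ ω, ⟪X i ω, ψ j⟫ ^ 2 ∂P = Λj)
    (hmom : ∀ i, ∫⁻ ω, ‖⟪X i ω, ψ j⟫ / √Λj‖ₑ ^ 4 ∂P ≤ ENNReal.ofReal η)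
    (hα : 2 * α ≤ Λj) :
    P {ω | estLam ψ (fun i => X i ω) j < α} ≤ ENNReal.ofReal (4 * η / n) := by
  have hcoord : Measurable fun x : H => ⟪x, ψ j⟫ :=
    (continuous_id.inner continuous_const).measurable
  have hfourth : ∀ i, ∫⁻ ω, ‖⟪X i ω, ψ j⟫‖ₑ ^ 4 ∂P ≤ ENNReal.ofReal (η * Λj ^ 2) := fun i => by
    rw [lintegral_enorm_pow_four_eq_mul _ hΛ, mul_comm, ENNReal.ofReal_mul hη]
    gcongr
    exact hmom i
  have hmeas : ∀ i, AEStronglyMeasurable (fun ω => ⟪X i ω, ψ j⟫) P :=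
    fun i => (hcoord.comp (hX i)).aestronglyMeasurable
  have hindep_sq : Pairwise fun i k =>
      (fun ω => ⟪X i ω, ψ j⟫ ^ 2) ⟂ᵢ[P] (fun ω => ⟪X k ω, ψ j⟫ ^ 2) := fun i k hik =>
    (hindep.comp (fun _ x => ⟪x, ψ j⟫ ^ 2) fun _ => hcoord.pow_const 2).indepFun hik
  have h := measure_sampleMean_lt_le hn hindep_sq
    (fun i => memLp_two_sq_of_lintegral_enorm_pow_four_ne_top (hmeas i)
      (ne_top_of_le_ne_top ENNReal.ofReal_ne_top (hfourth i)))
    hΛ hsecond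
    (fun i => (variance_sq_le_lintegral_enorm_pow_four (hmeas i)).trans
      (ENNReal.toReal_le_of_le_ofReal (by positivity) (hfourth i)))
    hα
  refine h.trans_eq ?_
  congr 1
  field_simp

lemma lintegral_coeff_truncBeta_sub_le {n : ℕ} {X : Fin n → Ω → H} (hX : ∀ i, Measurable (X i))
    {ωw γ : ℕ → ℝ} (hωpos : ∀ j, 0 < ωw j) (hγpos : ∀ j, 0 < γ j) (hω0 : ωw 0 = 1)
    (hγ0 : γ 0 = 1) (hmono : Monotone fun j => γ j / ωw j) (b : ℝ) (m : ℕ) (α : ℝ)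
    {p : ℝ≥0∞} (hp : ∀ j ≤ m, P {ω | estLam ψ (fun i => X i ω) j < α} ≤ p) (j : ℕ) :
    ∫⁻ ω, (if j < m + 1 ∧ α ≤ estLam ψ (fun i => X i ω) j then 0
      else ENNReal.ofReal (ωw j * b ^ 2)) ∂P ≤
      ENNReal.ofReal (γ j * b ^ 2) * (ENNReal.ofReal (ωw m / γ m) + p) := by
  by_cases hj : j ≤ m
  · have hind : (fun ω => if j < m + 1 ∧ α ≤ estLam ψ (fun i => X i ω) j then 0
        else ENNReal.ofReal (ωw j * b ^ 2)) =
        {ω | estLam ψ (fun i => X i ω) j < α}.indicator fun _ => ENNReal.ofReal (ωw j * b ^ 2) := by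
      ext ω
      by_cases h : α ≤ estLam ψ (fun i => X i ω) j <;>
        simp [Set.indicator_apply, Nat.lt_succ_of_le hj, h]
    have hωγ : ωw j ≤ γ j := by
      simpa [hω0, hγ0] using le_mul_div_of_monotone_div hmono (Nat.zero_le j) (hωpos 0)
        (hωpos j) (hγpos 0)
    rw [hind, lintegral_indicator_const
      (measurableSet_lt (measurable_estLam hX j) measurable_const)]
    exact mul_le_mul' (ENNReal.ofReal_le_ofReal (by gcongr)) ((hp j hj).trans le_add_self)
  · have htail : ωw j * b ^ 2 ≤ γ j * b ^ 2 * (ωw m / γ m) := by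
      rw [mul_right_comm]
      gcongr
      exact le_mul_div_of_monotone_div hmono (by omega) (hωpos m) (hωpos j) (hγpos m)
    simp only [show ¬ j < m + 1 by omega, false_and, if_false, lintegral_const, measure_univ,
      mul_one]
    calc ENNReal.ofReal (ωw j * b ^ 2)
        ≤ ENNReal.ofReal (γ j * b ^ 2 * (ωw m / γ m)) := ENNReal.ofReal_le_ofReal htail
      _ = ENNReal.ofReal (γ j * b ^ 2) * ENNReal.ofReal (ωw m / γ m) :=
        ENNReal.ofReal_mul (mul_nonneg (hγpos j).le (sq_nonneg _))
      _ ≤ _ := by gcongr; exact le_self_add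

lemma lintegral_wNormSq_truncBeta_sub_le (hψ : Orthonormal ℝ ψ) {n : ℕ} {X : Fin n → Ω → H}
    (hX : ∀ i, Measurable (X i)) {ωw γ : ℕ → ℝ} (hωpos : ∀ j, 0 < ωw j) (hγpos : ∀ j, 0 < γ j)
    (hω0 : ωw 0 = 1) (hγ0 : γ 0 = 1) (hmono : Monotone fun j => γ j / ωw j) (β : H) (m : ℕ)
    (α : ℝ) {p : ℝ≥0∞} (hp : ∀ j ≤ m, P {ω | estLam ψ (fun i => X i ω) j < α} ≤ p) :
    ∫⁻ ω, wNormSq ψ ωw (truncBeta ψ β (m + 1) α (fun i => X i ω) - β) ∂P ≤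
      wNormSq ψ γ β * (ENNReal.ofReal (ωw m / γ m) + p) := by
  set a : ℕ → ℝ≥0∞ := fun j => ENNReal.ofReal (ωw j * ⟪β, ψ j⟫ ^ 2)
  have hmeas : ∀ j, Measurable fun ω =>
      if j < m + 1 ∧ α ≤ estLam ψ (fun i => X i ω) j then 0 else a j := by
    intro j
    by_cases hj : j < m + 1
    · simpa only [hj, true_and] using
        Measurable.ite (measurableSet_le measurable_const (measurable_estLam hX j))
          measurable_const measurable_const
    · simp only [hj, false_and, if_false, measurable_const]
  calc ∫⁻ ω, wNormSq ψ ωw (truncBeta ψ β (m + 1) α (fun i => X i ω) - β) ∂P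
      = ∫⁻ ω, ∑' j, (if j < m + 1 ∧ α ≤ estLam ψ (fun i => X i ω) j then 0 else a j) ∂P := by
        simp only [wNormSq_truncBeta_sub_self hψ, a]
    _ = ∑' j, ∫⁻ ω, (if j < m + 1 ∧ α ≤ estLam ψ (fun i => X i ω) j then 0 else a j) ∂P :=
        lintegral_tsum fun j => (hmeas j).aemeasurable
    _ ≤ ∑' j, ENNReal.ofReal (γ j * ⟪β, ψ j⟫ ^ 2) * (ENNReal.ofReal (ωw m / γ m) + p) :=
        ENNReal.tsum_le_tsum fun j =>
          lintegral_coeff_truncBeta_sub_le hX hωpos hγpos hω0 hγ0 hmono _ m α hp j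
    _ = wNormSq ψ γ β * (ENNReal.ofReal (ωw m / γ m) + p) := ENNReal.tsum_mul_right

end Estimator

/-- Indices are `0`-based: `m : ℕ` here is the paper's dimension `m + 1`, so `β̃` keeps the
coefficients `j ∈ {0, …, m}` and the paper's `ω_m, γ_m` become `ωw m, γ m`. -/
theorem stmt16 :
    ∃ C : ℝ, 0 < C ∧
      ∀ (H : Type*) [NormedAddCommGroup H] [InnerProductSpace ℝ H] [CompleteSpace H]
        [MeasurableSpace H] [BorelSpace H]
        (Ω : Type*) [MeasurableSpace Ω] (P : Measure Ω) [IsProbabilityMeasure P]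
        (ψ : ℕ → H) (_hψ : Orthonormal ℝ ψ)
        (n : ℕ) (_hn : 0 < n) (X : Fin n → Ω → H)
        (_hXmeas : ∀ i, Measurable (X i))
        (_hindep : iIndepFun X P)
        (_hident : ∀ i i', IdentDistrib (X i) (X i') P P)
        (_hXcent : ∀ i, ∫ ω, X i ω ∂P = 0)
        (_hX2 : ∀ i, MemLp (X i) 2 P)
        (Λ : ℕ → ℝ) (_hΛpos : ∀ j, 0 < Λ j)
        (_hstat : ∀ i j k,
          ∫ ω, ⟪X i ω, ψ j⟫ * ⟪X i ω, ψ k⟫ ∂P = if j = k then Λ j else 0)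
        -- moment class `X ∈ 𝒳⁴_η`
        (η : ℝ) (_hη : 1 ≤ η)
        (_hXmom : ∀ (i : Fin n) (j : ℕ),
          ∫⁻ ω, (‖⟪X i ω, ψ j⟫ / Real.sqrt (Λ j)‖₊ : ℝ≥0∞) ^ (4 : ℕ) ∂P ≤
            ENNReal.ofReal η)
        -- weights
        (ωw γ : ℕ → ℝ) (_hωpos : ∀ j, 0 < ωw j) (_hγpos : ∀ j, 0 < γ j)
        (_hω1 : ωw 0 = 1) (_hγ1 : γ 0 = 1)
        (_hγωmono : Monotone fun j => γ j / ωw j)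
        -- slope with ‖β‖_γ < ∞
        (β : H) (_hβγ : wNormSq ψ γ β ≠ ⊤)
        -- dimension and threshold
        (m : ℕ) (α : ℝ) (_hα : 0 < α) (_hΛα : ∀ j ≤ m, 2 * α ≤ Λ j),
        ∫⁻ ω, wNormSq ψ ωw (truncBeta ψ β (m + 1) α (fun i => X i ω) - β) ∂P ≤
          ENNReal.ofReal
            (C * (ωw m / γ m + η / n) * (wNormSq ψ γ β).toReal) := by
  refine ⟨4, by norm_num, ?_⟩
  intro H _ _ _ _ _ Ω _ P _ ψ hψ n hn X hX hindep _ _ _ Λ hΛ hstat η hη hmom ωw γ hωpos hγpos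
    hω0 hγ0 hmono β hβ m α _ hΛα
  have hη0 : 0 ≤ η := zero_le_one.trans hη
  have hratio : 0 ≤ ωw m / γ m := div_nonneg (hωpos m).le (hγpos m).le
  have hp : ∀ j ≤ m, P {ω | estLam ψ (fun i => X i ω) j < α} ≤ ENNReal.ofReal (4 * η / n) :=
    fun j hj => measure_estLam_lt_le hn hX hindep (hΛ j) hη0
      (fun i => by simpa only [pow_two, if_pos] using hstat i j j) (hmom · j) (hΛα j hj)
  calc _ ≤ wNormSq ψ γ β * (ENNReal.ofReal (ωw m / γ m) + ENNReal.ofReal (4 * η / n)) :=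
        lintegral_wNormSq_truncBeta_sub_le hψ hX hωpos hγpos hω0 hγ0 hmono β m α hp
    _ = ENNReal.ofReal ((wNormSq ψ γ β).toReal * (ωw m / γ m + 4 * (η / n))) := by
        rw [ENNReal.ofReal_mul ENNReal.toReal_nonneg, ENNReal.ofReal_toReal hβ,
          ENNReal.ofReal_add hratio (by positivity), mul_div_assoc]
    _ ≤ _ := ENNReal.ofReal_le_ofReal (by
        nlinarith [mul_nonneg hratio (ENNReal.toReal_nonneg (a := wNormSq ψ γ β))])
end

section
/- Hellinger-affinity estimation inequality: Let μ be a σ-finite measure on a measurable space (Ω, 𝒜), let P and Q be probability measures on (Ω, 𝒜) absolutely continuous with respect to μ, with densities p and q, let f : Ω → ℝ be measurable, and let b, c ∈ ℝ with b ≠ c. Then ∫ √(p·q) dμ ≤ (∫ ((f − b)²/(b − c)²) dQ)^{1/2} + (∫ ((f − c)²/(b − c)²) dP)^{1/2}. -/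
open MeasureTheory ProbabilityTheory Filter
open scoped ENNReal NNReal RealInnerProductSpace BigOperators

/-!
Put `u = |f - b| / |b - c|` and `v = |f - c| / |b - c|`. The triangle inequality gives
`u + v ≥ 1`, so `√(pq) ≤ √q u · √p + √p v · √q`. Integrating and applying Cauchy–Schwarz to each
term bounds the first by `(∫ q u² dμ)^{1/2} (∫ p dμ)^{1/2} = (∫ u² dQ)^{1/2}`, and the second
symmetrically.
-/

lemma one_le_abs_sub_div_add_abs_sub_div {b c : ℝ} (hbc : b ≠ c) (x : ℝ) :
    1 ≤ |x - b| / |b - c| + |x - c| / |b - c| := by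
  have hpos : 0 < |b - c| := abs_pos.2 (sub_ne_zero.2 hbc)
  rw [← add_div, one_le_div hpos, abs_sub_comm x b]
  exact abs_sub_le b x c

lemma ENNReal.rpow_one_half_sq (x : ℝ≥0∞) : (x ^ (1 / 2 : ℝ)) ^ 2 = x := by
  rw [← ENNReal.rpow_natCast, ← ENNReal.rpow_mul]
  norm_num

lemma ENNReal.ofReal_abs_div_abs_sq (x y : ℝ) :
    ENNReal.ofReal (|x| / |y|) ^ 2 = ENNReal.ofReal (x ^ 2 / y ^ 2) := by
  rw [← ENNReal.ofReal_pow (by positivity), div_pow, sq_abs, sq_abs]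

section HellingerAffinity

variable {Ω : Type*} [MeasurableSpace Ω] {μ : Measure Ω} {p q g h : Ω → ℝ≥0∞}

lemma lintegral_sqrt_mul_mul_le (hp : AEMeasurable p μ) (hq : AEMeasurable q μ)
    (hg : AEMeasurable g μ) :
    ∫⁻ ω, (p ω * q ω) ^ (1 / 2 : ℝ) * g ω ∂μ ≤
      (∫⁻ ω, g ω ^ 2 ∂μ.withDensity q) ^ (1 / 2 : ℝ) * (∫⁻ ω, p ω ∂μ) ^ (1 / 2 : ℝ) := by
  have hhalf : (0 : ℝ) ≤ 1 / 2 := by norm_num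
  have hholder := ENNReal.lintegral_mul_le_Lp_mul_Lq μ Real.HolderConjugate.two_two
    ((hq.pow_const (1 / 2 : ℝ)).mul hg) (hp.pow_const (1 / 2 : ℝ))
  simp only [Pi.mul_apply, ENNReal.rpow_two, mul_pow, ENNReal.rpow_one_half_sq] at hholder
  rw [lintegral_withDensity_eq_lintegral_mul₀ hq (hg.pow_const 2)]
  calc ∫⁻ ω, (p ω * q ω) ^ (1 / 2 : ℝ) * g ω ∂μ
      = ∫⁻ ω, q ω ^ (1 / 2 : ℝ) * g ω * p ω ^ (1 / 2 : ℝ) ∂μ := by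
        congr 1 with ω
        rw [ENNReal.mul_rpow_of_nonneg _ _ hhalf]
        ring
    _ ≤ _ := hholder

lemma lintegral_sqrt_mul_le_add (hp : AEMeasurable p μ) (hq : AEMeasurable q μ)
    (hg : AEMeasurable g μ) (hh : AEMeasurable h μ) (hgh : ∀ ω, 1 ≤ g ω + h ω) :
    ∫⁻ ω, (p ω * q ω) ^ (1 / 2 : ℝ) ∂μ ≤
      (∫⁻ ω, g ω ^ 2 ∂μ.withDensity q) ^ (1 / 2 : ℝ) * (∫⁻ ω, p ω ∂μ) ^ (1 / 2 : ℝ) +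
      (∫⁻ ω, h ω ^ 2 ∂μ.withDensity p) ^ (1 / 2 : ℝ) * (∫⁻ ω, q ω ∂μ) ^ (1 / 2 : ℝ) :=
  calc ∫⁻ ω, (p ω * q ω) ^ (1 / 2 : ℝ) ∂μ
      ≤ ∫⁻ ω, ((p ω * q ω) ^ (1 / 2 : ℝ) * g ω + (q ω * p ω) ^ (1 / 2 : ℝ) * h ω) ∂μ :=
        lintegral_mono fun ω => by
          rw [mul_comm (q ω), ← mul_add]
          exact le_mul_of_one_le_right' (hgh ω)
    _ = ∫⁻ ω, (p ω * q ω) ^ (1 / 2 : ℝ) * g ω ∂μ +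
          ∫⁻ ω, (q ω * p ω) ^ (1 / 2 : ℝ) * h ω ∂μ :=
        lintegral_add_left' (((hp.mul hq).pow_const _).mul hg) _
    _ ≤ _ := add_le_add (lintegral_sqrt_mul_mul_le hp hq hg) (lintegral_sqrt_mul_mul_le hq hp hh)

end HellingerAffinity

lemma lintegral_density_eq_one {Ω : Type*} [MeasurableSpace Ω] {μ P : Measure Ω}
    [IsProbabilityMeasure P] {p : Ω → ℝ≥0∞} (hP : P = μ.withDensity p) :
    ∫⁻ ω, p ω ∂μ = 1 := by
  rw [← setLIntegral_univ, ← withDensity_apply _ MeasurableSet.univ, ← hP, measure_univ]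

theorem stmt18_general {Ω : Type*} [MeasurableSpace Ω] (μ : Measure Ω)
    (P Q : Measure Ω) [IsProbabilityMeasure P] [IsProbabilityMeasure Q]
    (p q : Ω → ℝ≥0∞) (hp : Measurable p) (hq : Measurable q)
    (hP : P = μ.withDensity p) (hQ : Q = μ.withDensity q)
    (f : Ω → ℝ) (hf : Measurable f) (b c : ℝ) (hbc : b ≠ c) :
    ∫⁻ ω, (p ω * q ω) ^ (1 / 2 : ℝ) ∂μ ≤
      (∫⁻ ω, ENNReal.ofReal ((f ω - b) ^ 2 / (b - c) ^ 2) ∂Q) ^ (1 / 2 : ℝ) +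
      (∫⁻ ω, ENNReal.ofReal ((f ω - c) ^ 2 / (b - c) ^ 2) ∂P) ^ (1 / 2 : ℝ) := by
  have hdist (a : ℝ) : AEMeasurable (fun ω => ENNReal.ofReal (|f ω - a| / |b - c|)) μ :=
    ((hf.sub_const a).abs.div_const _).ennreal_ofReal.aemeasurable
  have key := lintegral_sqrt_mul_le_add hp.aemeasurable hq.aemeasurable (hdist b) (hdist c)
    fun ω => by
      rw [← ENNReal.ofReal_add (by positivity) (by positivity), ← ENNReal.ofReal_one]
      exact ENNReal.ofReal_le_ofReal (one_le_abs_sub_div_add_abs_sub_div hbc (f ω))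
  simpa only [ENNReal.ofReal_abs_div_abs_sq, ← hP, ← hQ, lintegral_density_eq_one hP,
    lintegral_density_eq_one hQ, ENNReal.one_rpow, mul_one] using key

/-- Hellinger-affinity estimation inequality.  `P` and `Q` are probability
measures with densities `p`, `q` w.r.t. a σ-finite measure `μ`; for any measurable `f` and
reals `b ≠ c`,
`∫ √(pq) dμ ≤ (∫ (f-b)²/(b-c)² dQ)^{1/2} + (∫ (f-c)²/(b-c)² dP)^{1/2}`
(the integrals on the right are Lebesgue integrals in `ℝ≥0∞`, so that possibly infinite
second moments are allowed). -/
theorem stmt18 {Ω : Type*} [MeasurableSpace Ω] (μ : Measure Ω) [SigmaFinite μ]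
    (P Q : Measure Ω) [IsProbabilityMeasure P] [IsProbabilityMeasure Q]
    (p q : Ω → ℝ≥0∞) (hp : Measurable p) (hq : Measurable q)
    (hP : P = μ.withDensity p) (hQ : Q = μ.withDensity q)
    (f : Ω → ℝ) (hf : Measurable f) (b c : ℝ) (hbc : b ≠ c) :
    ∫⁻ ω, (p ω * q ω) ^ (1 / 2 : ℝ) ∂μ ≤
      (∫⁻ ω, ENNReal.ofReal ((f ω - b) ^ 2 / (b - c) ^ 2) ∂Q) ^ (1 / 2 : ℝ) +
      (∫⁻ ω, ENNReal.ofReal ((f ω - c) ^ 2 / (b - c) ^ 2) ∂P) ^ (1 / 2 : ℝ) :=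
  stmt18_general μ P Q p q hp hq hP hQ f hf b c hbc
end
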